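/- Let 𝒯 = {(14253, 10101), (15243, 10101)} be a set of two templates. Then for every n, every permutation in S_{n,𝒯} avoids all four patterns 2341, 2413, 2431, and 3241. -/

import Mathlib

/-- A *permutation word* of length `n`: a list that is a rearrangement of `1, 2, ..., n`
(where `n` is its length). -/
def IsPermWord (w : List ℕ) : Prop := w.Perm (List.range' 1 w.length)

/-- Two words are *order-isomorphic*: they have the same length and corresponding
entries compare in the same way. -/
def OrderIsoWord (u v : List ℕ) : Prop :=
  u.length = v.length ∧
    ∀ (i j : ℕ) (hi : i < u.length) (hj : j < u.length)
      (hi' : i < v.length) (hj' : j < v.length),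
      (u[i]'hi < u[j]'hj ↔ v[i]'hi' < v[j]'hj')

/-- `w` contains a copy of the pattern `σ`: some subsequence of `w` (given by increasing
indices) is order-isomorphic to `σ`. -/
def ContainsPattern (w σ : List ℕ) : Prop :=
  ∃ s : List ℕ, s.Sublist w ∧ OrderIsoWord s σ

/-- `w` avoids the pattern `σ`: it contains no copy of `σ`. -/
def AvoidsPattern (w σ : List ℕ) : Prop := ¬ ContainsPattern w σ

/-- Membership in the family of permutation-word sets `S_{n,𝒯}` generated by a finite
set `𝒯` of templates (the length index `n` is just the length of the word).
`InS Ts w` holds iff `w` is the empty word, a single-letter word, or, for some template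
`(P, B) ∈ Ts`, the concatenation of subwords `W_1, ..., W_t` (`t = |P|`, total length at
least `2`) such that: whenever `p_i > p_j` every element of `W_i` exceeds every element of
`W_j`; each `W_i` is order-isomorphic to a permutation word `V_i` that again satisfies
`InS`; and whenever `b_i = 0` the subword `W_i` has exactly one element. -/
inductive InS (Ts : List (List ℕ × List Bool)) : List ℕ → Prop where
  | nil : InS Ts []
  | single (x : ℕ) : InS Ts [x]
  | join (P : List ℕ) (B : List Bool) (hT : (P, B) ∈ Ts)
      (Ws Vs : List (List ℕ)) (hlen : Ws.length = P.length)
      (hVs : Vs.length = Ws.length)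
      (h2 : 2 ≤ Ws.flatten.length)
      (horder : ∀ (i j : ℕ) (hi : i < Ws.length) (hj : j < Ws.length),
          P[j]'(by omega) < P[i]'(by omega) →
          ∀ x ∈ Ws[i]'hi, ∀ y ∈ Ws[j]'hj, y < x)
      (hiso : ∀ (i : ℕ) (hi : i < Ws.length),
          IsPermWord (Vs[i]'(by omega)) ∧ OrderIsoWord (Ws[i]'hi) (Vs[i]'(by omega)))
      (hrec : ∀ (i : ℕ) (hi : i < Vs.length), InS Ts (Vs[i]'hi))
      (hzero : ∀ (i : ℕ) (hi : i < Ws.length) (hb : i < B.length),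
          B[i]'hb = false → (Ws[i]'hi).length = 1) :
      InS Ts Ws.flatten

/-- The set `S_{n,𝒯}` of permutation words of length `n` generated by the finite set
`Ts` of templates. -/
def Sset (Ts : List (List ℕ × List Bool)) (n : ℕ) : Set (List ℕ) :=
  {w | w.length = n ∧ IsPermWord w ∧ InS Ts w}

/-!
A word generated by the two templates has the shape `A x C y E`, where the blocks satisfy
`A < C < E` elementwise, the letters `x ≠ y` exceed all of them, and the blocks avoid the
pattern by induction. Each of the four patterns is sum-indecomposable, so it cannot occur in
the direct sum `A C E` without lying inside one block. Each pattern also has an inversion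
`b < a` straddling its maximum whose upper entry `a` is not the second-largest entry. An
occurrence using `x` or `y` has one of them as its maximum: if it is `x`, nothing before
it exceeds anything after it; if it is `y`, the only letter before it exceeding a letter
after it is `x`, which is the second-largest letter of the word.
-/

namespace List

variable {α : Type*}

theorem forall_eq_append_imp_iff {l : List α} {P : List α → List α → Prop} :
    (∀ u v, l = u ++ v → P u v) ↔ ∀ i ≤ l.length, P (l.take i) (l.drop i) := by
  refine ⟨fun h i _ => h _ _ (take_append_drop i l).symm, ?_⟩
  rintro h u v rfl
  simpa using h u.length (by simp)

theorem forall_eq_append_cons_imp_iff {l : List α} {P : List α → α → List α → Prop} :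
    (∀ u a v, l = u ++ a :: v → P u a v) ↔
      ∀ (i) (hi : i < l.length), P (l.take i) l[i] (l.drop (i + 1)) := by
  refine ⟨fun h i hi => h _ _ _ ?_, ?_⟩
  · rw [← drop_eq_getElem_cons hi, take_append_drop]
  · rintro h u a v rfl
    simpa using h u.length (by simp)

end List

def SumIndecomposable (τ : List ℕ) : Prop :=
  ∀ u v, τ = u ++ v → u ≠ [] → v ≠ [] → ∃ a ∈ u, ∃ b ∈ v, b < a

def HasLowInversionAcrossMax (τ : List ℕ) : Prop :=
  ∀ u n v, τ = u ++ n :: v → (∀ z ∈ u ++ v, z < n) →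
    ∃ a ∈ u, ∃ b ∈ v, ∃ c ∈ u ++ v, b < a ∧ a < c

theorem OrderIsoWord.exists_strictMonoOn {u v : List ℕ} (h : OrderIsoWord u v) :
    ∃ f : ℕ → ℕ, StrictMonoOn f {x | x ∈ u} ∧ v = u.map f := by
  obtain ⟨hlen, hlt⟩ := h
  have hidx {x} (hx : x ∈ u) : u.idxOf x < u.length := List.idxOf_lt_length_iff.2 hx
  have hget {x} (hx : x ∈ u) : v.getD (u.idxOf x) 0 = v[u.idxOf x]'(hlen ▸ hidx hx) :=
    List.getD_eq_getElem ..
  refine ⟨fun x => v.getD (u.idxOf x) 0, fun x hx y hy hxy => ?_, ?_⟩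
  · simp only [hget hx, hget hy, ← hlt _ _ (hidx hx) (hidx hy)]
    simpa [List.getElem_idxOf] using hxy
  · refine List.ext_getElem (by simp [hlen]) fun i hi _ => ?_
    have hi' : i < u.length := hlen ▸ hi
    simp only [List.getElem_map, hget (List.getElem_mem hi')]
    have hj := hidx (List.getElem_mem hi')
    refine le_antisymm (not_lt.1 ?_) (not_lt.1 ?_)
    · rw [← hlt _ _ hj hi']
      simp [List.getElem_idxOf]
    · rw [← hlt _ _ hi' hj]
      simp [List.getElem_idxOf]

theorem OrderIsoWord.map {s τ : List ℕ} {f : ℕ → ℕ} (h : OrderIsoWord s τ)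
    (hf : StrictMonoOn f {x | x ∈ s}) : OrderIsoWord (s.map f) τ :=
  ⟨by simp [h.1], fun i j hi hj _ _ => by
    simp only [List.getElem_map]
    rw [hf.lt_iff_lt (List.getElem_mem _) (List.getElem_mem _)]
    exact h.2 i j _ _ _ _⟩

theorem AvoidsPattern.of_orderIsoWord {u v τ : List ℕ} (h : OrderIsoWord u v)
    (hv : AvoidsPattern v τ) : AvoidsPattern u τ := by
  obtain ⟨f, hf, rfl⟩ := h.exists_strictMonoOn
  rintro ⟨s, hs, hsτ⟩
  exact hv ⟨s.map f, hs.map f, hsτ.map (hf.mono fun _ hx => hs.subset hx)⟩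

theorem SumIndecomposable.of_orderIsoWord {s τ : List ℕ} (hτ : SumIndecomposable τ)
    (h : OrderIsoWord s τ) : SumIndecomposable s := by
  obtain ⟨f, hf, rfl⟩ := h.exists_strictMonoOn
  rintro u v rfl hu hv
  obtain ⟨_, hfa, _, hfb, hba⟩ :=
    hτ (u.map f) (v.map f) (List.map_append ..) (by simpa) (by simpa)
  obtain ⟨a, ha, rfl⟩ := List.mem_map.1 hfa
  obtain ⟨b, hb, rfl⟩ := List.mem_map.1 hfb
  exact ⟨a, ha, b, hb, (hf.lt_iff_lt (by simp [hb]) (by simp [ha])).1 hba⟩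

theorem HasLowInversionAcrossMax.of_orderIsoWord {s τ : List ℕ}
    (hτ : HasLowInversionAcrossMax τ) (h : OrderIsoWord s τ) : HasLowInversionAcrossMax s := by
  obtain ⟨f, hf, rfl⟩ := h.exists_strictMonoOn
  rintro u n v rfl hn
  have hmem : ∀ z ∈ u ++ v, z ∈ u ++ n :: v := fun z hz => by simp at hz ⊢; tauto
  have hfn : ∀ z ∈ (u ++ v).map f, z < f n := fun _ hfz => by
    obtain ⟨z, hz, rfl⟩ := List.mem_map.1 hfz
    exact (hf.lt_iff_lt (hmem z hz) (by simp)).2 (hn z hz)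
  obtain ⟨_, hfa, _, hfb, _, hfc, hba, hac⟩ :=
    hτ (u.map f) (f n) (v.map f) (by simp) (by rwa [← List.map_append])
  rw [← List.map_append] at hfc
  obtain ⟨a, ha, rfl⟩ := List.mem_map.1 hfa
  obtain ⟨b, hb, rfl⟩ := List.mem_map.1 hfb
  obtain ⟨c, hc, rfl⟩ := List.mem_map.1 hfc
  have ha' := hmem a (by simp [ha])
  exact ⟨a, ha, b, hb, c, hc, (hf.lt_iff_lt (hmem b (by simp [hb])) ha').1 hba,
    (hf.lt_iff_lt ha' (hmem c hc)).1 hac⟩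

theorem AvoidsPattern.of_length_lt {w τ : List ℕ} (h : w.length < τ.length) :
    AvoidsPattern w τ := fun ⟨_, hs, hsτ⟩ => (hs.length_le.trans_lt h).ne hsτ.1

theorem AvoidsPattern.append {τ u v : List ℕ} (hτ : SumIndecomposable τ)
    (huv : ∀ a ∈ u, ∀ b ∈ v, a < b) (hu : AvoidsPattern u τ) (hv : AvoidsPattern v τ) :
    AvoidsPattern (u ++ v) τ := by
  rintro ⟨s, hs, hsτ⟩
  obtain ⟨s₁, s₂, rfl, h₁, h₂⟩ := List.sublist_append_iff.1 hs
  by_cases hs₁ : s₁ = []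
  · exact hv ⟨s₂, h₂, by simpa [hs₁] using hsτ⟩
  by_cases hs₂ : s₂ = []
  · exact hu ⟨s₁, h₁, by simpa [hs₂] using hsτ⟩
  obtain ⟨a, ha, b, hb, hba⟩ := hτ.of_orderIsoWord hsτ s₁ s₂ rfl hs₁ hs₂
  exact (huv a (h₁.subset ha) b (h₂.subset hb)).not_gt hba

theorem AvoidsPattern.insert_max {τ u v : List ℕ} {m : ℕ} (hτ : HasLowInversionAcrossMax τ)
    (hm : ∀ z ∈ u ++ v, z < m) (hinv : ∀ a ∈ u, ∀ b ∈ v, b < a → ∀ z ∈ u ++ v, z ≤ a)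
    (huv : AvoidsPattern (u ++ v) τ) : AvoidsPattern (u ++ m :: v) τ := by
  rintro ⟨s, hs, hsτ⟩
  rw [← List.singleton_append] at hs
  obtain ⟨s₁, t, rfl, h₁, ht⟩ := List.sublist_append_iff.1 hs
  obtain ⟨s₂, s₃, rfl, h₂, h₃⟩ := List.sublist_append_iff.1 ht
  have h₁₃ := h₁.append h₃
  rcases List.sublist_singleton.1 h₂ with rfl | rfl
  · exact huv ⟨s₁ ++ s₃, h₁₃, by simpa using hsτ⟩
  obtain ⟨a, ha, b, hb, c, hc, hba, hac⟩ :=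
    hτ.of_orderIsoWord hsτ s₁ m s₃ rfl fun z hz => hm z (h₁₃.subset hz)
  exact (hinv a (h₁.subset ha) b (h₃.subset hb) hba c (h₁₃.subset hc)).not_gt hac

theorem AvoidsPattern.append_cons_of_lt {τ u v : List ℕ} {m : ℕ} (hτ : SumIndecomposable τ)
    (hτ' : HasLowInversionAcrossMax τ) (huv : ∀ a ∈ u, ∀ b ∈ v, a < b)
    (hm : ∀ z ∈ u ++ v, z < m) (hu : AvoidsPattern u τ) (hv : AvoidsPattern v τ) :
    AvoidsPattern (u ++ m :: v) τ :=
  (hu.append hτ huv hv).insert_max hτ' hm fun a ha b hb hba => absurd (huv a ha b hb) hba.not_gt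

theorem AvoidsPattern.template_join {τ A C E : List ℕ} {x y : ℕ} (hτ : SumIndecomposable τ)
    (hτ' : HasLowInversionAcrossMax τ) (hA : AvoidsPattern A τ) (hC : AvoidsPattern C τ)
    (hE : AvoidsPattern E τ) (hAC : ∀ a ∈ A, ∀ c ∈ C, a < c) (hAE : ∀ a ∈ A, ∀ e ∈ E, a < e)
    (hCE : ∀ c ∈ C, ∀ e ∈ E, c < e) (hlow : ∀ z ∈ A ++ C ++ E, z < x ∧ z < y)
    (hxy : x ≠ y) :
    AvoidsPattern (A ++ x :: (C ++ y :: E)) τ := by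
  have hx z (hz : z ∈ A ++ C ++ E) : z < x := (hlow z hz).1
  have hy z (hz : z ∈ A ++ C ++ E) : z < y := (hlow z hz).2
  have hA_CE : ∀ a ∈ A, ∀ z ∈ C ++ E, a < z := fun a ha z hz => by
    rcases List.mem_append.1 hz with hz | hz
    exacts [hAC a ha z hz, hAE a ha z hz]
  rcases hxy.lt_or_gt with hx_lt_y | hy_lt_x
  · rw [show A ++ x :: (C ++ y :: E) = A ++ x :: C ++ y :: E by simp]
    refine AvoidsPattern.insert_max hτ' (fun z hz => ?_) (fun a ha b hb hba z hz => ?_) ?_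
    · simp only [List.mem_append, List.mem_cons] at hz
      rcases hz with (hz | rfl | hz) | hz
      exacts [hy z (by simp [hz]), hx_lt_y, hy z (by simp [hz]), hy z (by simp [hz])]
    · obtain rfl : a = x := by
        simp only [List.mem_append, List.mem_cons] at ha
        rcases ha with ha | rfl | ha
        exacts [absurd (hAE a ha b hb) hba.not_gt, rfl, absurd (hCE a ha b hb) hba.not_gt]
      simp only [List.mem_append, List.mem_cons] at hz
      rcases hz with (hz | rfl | hz) | hz
      exacts [(hx z (by simp [hz])).le, le_rfl, (hx z (by simp [hz])).le,
        (hx z (by simp [hz])).le]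
    · rw [show A ++ x :: C ++ E = A ++ x :: (C ++ E) by simp]
      exact AvoidsPattern.append_cons_of_lt hτ hτ' hA_CE (fun z hz => hx z (by simpa using hz))
        hA (hC.append hτ hCE hE)
  · refine AvoidsPattern.append_cons_of_lt hτ hτ' (fun a ha z hz => ?_) (fun z hz => ?_) hA
      (AvoidsPattern.append_cons_of_lt hτ hτ' hCE (fun z hz => hy z (by simp_all)) hC hE)
    · simp only [List.mem_append, List.mem_cons] at hz
      rcases hz with hz | rfl | hz
      exacts [hAC a ha z hz, hy a (by simp [ha]), hAE a ha z hz]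
    · simp only [List.mem_append, List.mem_cons] at hz
      rcases hz with hz | hz | rfl | hz
      exacts [hx z (by simp [hz]), hx z (by simp [hz]), hy_lt_x, hx z (by simp [hz])]

theorem sumIndecomposable_and_hasLowInversionAcrossMax {τ : List ℕ}
    (hτ : τ ∈ [[2, 3, 4, 1], [2, 4, 1, 3], [2, 4, 3, 1], [3, 2, 4, 1]]) :
    SumIndecomposable τ ∧ HasLowInversionAcrossMax τ := by
  simp only [List.mem_cons, List.not_mem_nil, or_false] at hτ
  rcases hτ with rfl | rfl | rfl | rfl <;>
    simp only [SumIndecomposable, HasLowInversionAcrossMax, List.forall_eq_append_imp_iff,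
      List.forall_eq_append_cons_imp_iff] <;> decide

theorem InS.avoidsPattern {τ w : List ℕ} (hτ : SumIndecomposable τ)
    (hτ' : HasLowInversionAcrossMax τ) (hτ₂ : 1 < τ.length)
    (hw : InS [([1, 4, 2, 5, 3], [true, false, true, false, true]),
      ([1, 5, 2, 4, 3], [true, false, true, false, true])] w) : AvoidsPattern w τ := by
  induction hw with
  | nil => exact .of_length_lt (by simp; omega)
  | single x => exact .of_length_lt (by simpa using hτ₂)
  | join P B hT Ws Vs hlen hVs _ horder hiso _ hzero ih =>
    have hWs i (hi : i < Ws.length) : AvoidsPattern Ws[i] τ :=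
      (ih i (hVs ▸ hi)).of_orderIsoWord (hiso i hi).2
    simp only [List.mem_cons, List.not_mem_nil, or_false, Prod.mk.injEq] at hT
    obtain ⟨hP, rfl⟩ : (P = [1, 4, 2, 5, 3] ∨ P = [1, 5, 2, 4, 3]) ∧
        B = [true, false, true, false, true] := by tauto
    obtain ⟨A, W₁, C, W₃, E, rfl⟩ : ∃ A W₁ C W₃ E, Ws = [A, W₁, C, W₃, E] := by
      match Ws, (by rw [hlen]; rcases hP with rfl | rfl <;> rfl : Ws.length = 5) with
      | [A, W₁, C, W₃, E], _ => exact ⟨A, W₁, C, W₃, E, rfl⟩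
    obtain ⟨x, rfl⟩ := List.length_eq_one_iff.1 (hzero 1 (by simp) (by simp) rfl)
    obtain ⟨y, rfl⟩ := List.length_eq_one_iff.1 (hzero 3 (by simp) (by simp) rfl)
    have hPlt : ∀ i (hi : i < P.length) j (hj : j < P.length), j % 2 = 0 →
        (i % 2 = 1 ∨ j < i) → P[j] < P[i] := by
      rcases hP with rfl | rfl <;> decide
    have below (i j : ℕ) (hij : i < 5 ∧ j < 5 ∧ j % 2 = 0 ∧ (i % 2 = 1 ∨ j < i)) :
        ∀ a ∈ [A, [x], C, [y], E][i]'(by simp; omega),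
          ∀ b ∈ [A, [x], C, [y], E][j]'(by simp; omega), b < a := by
      simp only [List.length_cons, List.length_nil] at hlen
      exact horder i j _ _ (hPlt i (by omega) j (by omega) hij.2.2.1 hij.2.2.2)
    have hlow : ∀ z ∈ A ++ C ++ E, z < x ∧ z < y := by
      simp only [List.mem_append]
      rintro z ((hz | hz) | hz)
      exacts [⟨below 1 0 (by decide) x (by simp) z hz, below 3 0 (by decide) y (by simp) z hz⟩,
        ⟨below 1 2 (by decide) x (by simp) z hz, below 3 2 (by decide) y (by simp) z hz⟩,
        ⟨below 1 4 (by decide) x (by simp) z hz, below 3 4 (by decide) y (by simp) z hz⟩]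
    have hxy : x ≠ y := by
      rcases hP with rfl | rfl
      · exact (horder 3 1 (by simp) (by simp) (by simp) y (by simp) x (by simp)).ne
      · exact (horder 1 3 (by simp) (by simp) (by simp) x (by simp) y (by simp)).ne'
    simpa using (hWs 0 (by simp)).template_join hτ hτ' (hWs 2 (by simp)) (hWs 4 (by simp))
      (fun a ha c hc => below 2 0 (by decide) c hc a ha)
      (fun a ha e he => below 4 0 (by decide) e he a ha)
      (fun c hc e he => below 4 2 (by decide) e he c hc) hlow hxy

/-- Let `𝒯 = {(14253, 10101), (15243, 10101)}`.  Then for every `n`,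
every permutation in `S_{n,𝒯}` avoids all four patterns `2341`, `2413`, `2431`, `3241`. -/
theorem templates_14253_15243_avoid (n : ℕ) (w : List ℕ)
    (hw : w ∈ Sset [([1, 4, 2, 5, 3], [true, false, true, false, true]),
      ([1, 5, 2, 4, 3], [true, false, true, false, true])] n) :
    AvoidsPattern w [2, 3, 4, 1] ∧ AvoidsPattern w [2, 4, 1, 3] ∧
      AvoidsPattern w [2, 4, 3, 1] ∧ AvoidsPattern w [3, 2, 4, 1] := by
  obtain ⟨-, -, hw⟩ := hw
  have avoids {τ} (hτ : τ ∈ [[2, 3, 4, 1], [2, 4, 1, 3], [2, 4, 3, 1], [3, 2, 4, 1]]) :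
      AvoidsPattern w τ := by
    obtain ⟨h₁, h₂⟩ := sumIndecomposable_and_hasLowInversionAcrossMax hτ
    exact hw.avoidsPattern h₁ h₂ (by fin_cases hτ <;> decide)
  exact ⟨avoids (by simp), avoids (by simp), avoids (by simp), avoids (by simp)⟩
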